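/- Let (X, μ) be a measure space, p > 1, κ > 1, and S > 0. Suppose the Sobolev inequality (∫ |v|^{pκ} dμ)^{1/κ} ≤ S ∫ |∇v|^p dμ holds for some nonnegative measurable v with ‖v‖_{L^r} > 0 and finite relevant norms, where here |∇v| is replaced by a given nonnegative function g with ∫ g^p dμ in place of the gradient energy. Then for every ε > 0 and every r ∈ (0, pκ), the entropy functional J(r,v) = ∫ (v^r/‖v‖_{L^r}^r) log(v/‖v‖_{L^r}) dμ satisfies r·J(r,v) ≤ (rκSε/(pκ−r))·(∫ g^p dμ)/‖v‖_{L^r}^p − (rκ/(pκ−r))·log ε. -/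

import Mathlib

/-!
With `w = v ^ r / ‖v‖_r ^ r`, a probability density, `r * J(r, v) = ∫ w log w`. Multiplying the
tangent-line bound `log (c u ^ (s - 1)) ≤ c u ^ (s - 1) - 1` by `u = w` and integrating, with
`s = pκ / r` and `c = (∫ w ^ s)⁻¹`, bounds this entropy by the Rényi entropy `log (∫ w ^ s) / (s - 1)`,
that is by `(r log ‖v‖_{pκ}^{pκ} - pκ log ‖v‖_r^r) / (pκ - r)`. The Sobolev inequality bounds
`‖v‖_{pκ}` by the energy, and `log y ≤ ε y - log ε` linearises the logarithm of the energy.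
-/

open MeasureTheory Real

lemma sub_one_mul_mul_log_le {u s c : ℝ} (hu : 0 ≤ u) (hs : 1 < s) (hc : 0 < c) :
    (s - 1) * (u * log u) ≤ c * u ^ s - (1 + log c) * u := by
  rcases hu.eq_or_lt with rfl | hu
  · simp [zero_rpow (by linarith : s ≠ 0)]
  have hpow : u ^ s = u ^ (s - 1) * u := by rw [← rpow_add_one hu.ne']; ring_nf
  have htangent := log_le_sub_one_of_pos (mul_pos hc (rpow_pos_of_pos hu (s - 1)))
  rw [log_mul hc.ne' (rpow_pos_of_pos hu _).ne', log_rpow hu] at htangent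
  rw [hpow]
  nlinarith [mul_le_mul_of_nonneg_left htangent hu.le]

lemma log_le_mul_sub_log {ε y : ℝ} (hε : 0 < ε) (hy : 0 < y) : log y ≤ ε * y - log ε := by
  have h := log_le_sub_one_of_pos (mul_pos hε hy)
  rw [log_mul hε.ne' hy.ne'] at h
  linarith

lemma log_rpow_div_eq_mul_log {t N r : ℝ} (ht : 0 ≤ t) (hN : 0 < N) (hr : r ≠ 0) :
    log (t ^ r / N) = r * log (t / N ^ (1 / r)) := by
  rcases ht.eq_or_lt with rfl | ht
  · simp [zero_rpow hr]
  rw [log_div (rpow_pos_of_pos ht r).ne' hN.ne', log_div ht.ne' (rpow_pos_of_pos hN _).ne',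
    log_rpow ht, log_rpow hN]
  field_simp

section Integrals

variable {X : Type*} [MeasurableSpace X] {μ : Measure X}

lemma integral_rpow_pos_of_integral_rpow_pos {f : X → ℝ} {q r : ℝ} (hf : ∀ x, 0 ≤ f x)
    (hq : q ≠ 0) (hfq : Integrable (fun x => f x ^ q) μ) (hr : r ≠ 0)
    (h : 0 < ∫ x, f x ^ r ∂μ) : 0 < ∫ x, f x ^ q ∂μ := by
  refine (integral_nonneg fun x => rpow_nonneg (hf x) q).lt_of_ne fun h0 => h.ne' ?_
  have hzero : (fun x => f x ^ q) =ᵐ[μ] 0 :=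
    (integral_eq_zero_iff_of_nonneg (fun x => rpow_nonneg (hf x) q) hfq).1 h0.symm
  refine integral_eq_zero_of_ae ?_
  filter_upwards [hzero] with x hx
  simp [(rpow_eq_zero (hf x) hq).1 hx, zero_rpow hr]

theorem integral_mul_log_le_log_integral_rpow {w : X → ℝ} {s : ℝ} (hs : 1 < s)
    (hw0 : ∀ x, 0 ≤ w x) (hw : Integrable w μ) (hws : Integrable (fun x => w x ^ s) μ)
    (hwlog : Integrable (fun x => w x * log (w x)) μ) (hw1 : ∫ x, w x ∂μ = 1) :
    ∫ x, w x * log (w x) ∂μ ≤ log (∫ x, w x ^ s ∂μ) / (s - 1) := by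
  set I := ∫ x, w x ^ s ∂μ
  have hI : 0 < I := integral_rpow_pos_of_integral_rpow_pos hw0 (by linarith) hws one_ne_zero
    (by simp only [rpow_one, hw1, one_pos])
  have hbound : (s - 1) * ∫ x, w x * log (w x) ∂μ ≤ log I := calc
    (s - 1) * ∫ x, w x * log (w x) ∂μ = ∫ x, (s - 1) * (w x * log (w x)) ∂μ :=
      (integral_const_mul _ _).symm
    _ ≤ ∫ x, I⁻¹ * w x ^ s - (1 + log I⁻¹) * w x ∂μ :=
      integral_mono (hwlog.const_mul _) ((hws.const_mul _).sub (hw.const_mul _))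
        fun x => sub_one_mul_mul_log_le (hw0 x) hs (inv_pos.2 hI)
    _ = log I := by
      rw [integral_sub (hws.const_mul _) (hw.const_mul _), integral_const_mul, integral_const_mul,
        hw1, inv_mul_cancel₀ hI.ne', log_inv]
      ring
  rw [le_div_iff₀ (by linarith), mul_comm]
  exact hbound

theorem mul_integral_entropy_le {v : X → ℝ} {r q : ℝ} (hv0 : ∀ x, 0 ≤ v x) (hr : 0 < r)
    (hrq : r < q) (hvr : Integrable (fun x => v x ^ r) μ) (hN : 0 < ∫ x, v x ^ r ∂μ)
    (hvq : Integrable (fun x => v x ^ q) μ)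
    (hJ : Integrable (fun x =>
      (v x ^ r / ∫ y, v y ^ r ∂μ) * log (v x / (∫ y, v y ^ r ∂μ) ^ (1 / r))) μ) :
    r * ∫ x, (v x ^ r / ∫ y, v y ^ r ∂μ) * log (v x / (∫ y, v y ^ r ∂μ) ^ (1 / r)) ∂μ ≤
      (r * log (∫ x, v x ^ q ∂μ) - q * log (∫ x, v x ^ r ∂μ)) / (q - r) := by
  set N := ∫ x, v x ^ r ∂μ
  set w := fun x => v x ^ r / N with hw
  have hentropy : ∀ x, r * (w x * log (v x / N ^ (1 / r))) = w x * log (w x) := fun x => by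
    rw [hw, log_rpow_div_eq_mul_log (hv0 x) hN hr.ne']
    ring
  have hws : ∀ x, w x ^ (q / r) = v x ^ q / N ^ (q / r) := fun x => by
    rw [hw, div_rpow (rpow_nonneg (hv0 x) r) hN.le, ← rpow_mul (hv0 x), mul_div_cancel₀ _ hr.ne']
  have hM : 0 < ∫ x, v x ^ q ∂μ :=
    integral_rpow_pos_of_integral_rpow_pos hv0 (by linarith) hvq hr.ne' hN
  have hrenyi := integral_mul_log_le_log_integral_rpow (μ := μ) (w := w) ((one_lt_div hr).2 hrq)
    (fun x => div_nonneg (rpow_nonneg (hv0 x) r) hN.le) (hvr.div_const N)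
    (by simp_rw [hws]; exact hvq.div_const _) ((hJ.const_mul r).congr (ae_of_all _ hentropy))
    (by rw [integral_div, div_self hN.ne'])
  calc r * ∫ x, w x * log (v x / N ^ (1 / r)) ∂μ = ∫ x, w x * log (w x) ∂μ := by
        rw [← integral_const_mul]
        exact integral_congr_ae (ae_of_all _ hentropy)
    _ ≤ log (∫ x, w x ^ (q / r) ∂μ) / (q / r - 1) := hrenyi
    _ = (r * log (∫ x, v x ^ q ∂μ) - q * log N) / (q - r) := by
      simp_rw [hws]
      rw [integral_div, log_div hM.ne' (rpow_pos_of_pos hN _).ne', log_rpow hN]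
      have : q - r ≠ 0 := by linarith
      field_simp

end Integrals

theorem log_sobolev_from_sobolev_general
    {X : Type*} [MeasurableSpace X] (μ : Measure X)
    (p κ S : ℝ) (hκ : 1 < κ)
    (v g : X → ℝ) (hv0 : ∀ x, 0 ≤ v x)
    (hSob : (∫ x, v x ^ (p * κ) ∂μ) ^ (1 / κ) ≤ S * ∫ x, g x ^ p ∂μ) :
    ∀ ε r : ℝ, 0 < ε → 0 < r → r < p * κ →
      Integrable (fun x => v x ^ r) μ →
      0 < ∫ x, v x ^ r ∂μ →
      Integrable (fun x => v x ^ (p * κ)) μ →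
      Integrable (fun x =>
        (v x ^ r / ∫ y, v y ^ r ∂μ) *
          Real.log (v x / (∫ y, v y ^ r ∂μ) ^ (1 / r))) μ →
      r * ∫ x, (v x ^ r / ∫ y, v y ^ r ∂μ) *
            Real.log (v x / (∫ y, v y ^ r ∂μ) ^ (1 / r)) ∂μ ≤
        (r * κ * S * ε / (p * κ - r)) *
            ((∫ x, g x ^ p ∂μ) / (∫ y, v y ^ r ∂μ) ^ (p / r)) -
          (r * κ / (p * κ - r)) * Real.log ε := by
  intro ε r hε hr hrpκ hvr hN hvpκ hJ
  set N := ∫ y, v y ^ r ∂μ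
  set M := ∫ x, v x ^ (p * κ) ∂μ
  set E := ∫ x, g x ^ p ∂μ
  have hM : 0 < M := integral_rpow_pos_of_integral_rpow_pos hv0 (by linarith) hvpκ hr.ne' hN
  have hSE : 0 < S * E := (rpow_pos_of_pos hM _).trans_le hSob
  have hlogM : log M ≤ κ * log (S * E) := by
    have h := log_le_log (rpow_pos_of_pos hM _) hSob
    rw [log_rpow hM, one_div, inv_mul_le_iff₀ (by linarith)] at h
    exact h
  have hT : 0 < N ^ (p / r) := rpow_pos_of_pos hN _
  have hlogy := log_le_mul_sub_log hε (div_pos hSE hT)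
  rw [log_div hSE.ne' hT.ne', log_rpow hN] at hlogy
  have hgap : 0 < p * κ - r := by linarith
  calc _ ≤ (r * log M - p * κ * log N) / (p * κ - r) :=
        mul_integral_entropy_le hv0 hr hrpκ hvr hN hvpκ hJ
    _ ≤ (r * (κ * log (S * E)) - p * κ * log N) / (p * κ - r) := by gcongr
    _ = r * κ / (p * κ - r) * (log (S * E) - p / r * log N) := by field_simp
    _ ≤ r * κ / (p * κ - r) * (ε * (S * E / N ^ (p / r)) - log ε) := by gcongr
    _ = _ := by ring

/-- Log-Sobolev type inequality derived from an abstract Sobolev inequality.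
`g` plays the role of `|∇v|` and `E = ∫ g^p` is the gradient energy. -/
theorem log_sobolev_from_sobolev
    {X : Type*} [MeasurableSpace X] (μ : Measure X)
    (p κ S : ℝ) (hp : 1 < p) (hκ : 1 < κ) (hS : 0 < S)
    (v g : X → ℝ) (hv : Measurable v) (hv0 : ∀ x, 0 ≤ v x) (hg0 : ∀ x, 0 ≤ g x)
    (hgInt : Integrable (fun x => g x ^ p) μ)
    (hSob : (∫ x, v x ^ (p * κ) ∂μ) ^ (1 / κ) ≤ S * ∫ x, g x ^ p ∂μ) :
    ∀ ε r : ℝ, 0 < ε → 0 < r → r < p * κ →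
      Integrable (fun x => v x ^ r) μ →
      0 < ∫ x, v x ^ r ∂μ →
      Integrable (fun x => v x ^ (p * κ)) μ →
      Integrable (fun x =>
        (v x ^ r / ∫ y, v y ^ r ∂μ) *
          Real.log (v x / (∫ y, v y ^ r ∂μ) ^ (1 / r))) μ →
      r * ∫ x, (v x ^ r / ∫ y, v y ^ r ∂μ) *
            Real.log (v x / (∫ y, v y ^ r ∂μ) ^ (1 / r)) ∂μ ≤
        (r * κ * S * ε / (p * κ - r)) *
            ((∫ x, g x ^ p ∂μ) / (∫ y, v y ^ r ∂μ) ^ (p / r)) -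
          (r * κ / (p * κ - r)) * Real.log ε :=
  log_sobolev_from_sobolev_general μ p κ S hκ v g hv0 hSob
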